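/- Let R_ℓ be the free unital associative 𝔽-algebra on x₁,…,x_ℓ with partial derivatives ∂/∂x_i. Let A = (A_{ij})_{i,j=1}^{ℓ} be a family with A_{ij} ∈ R_ℓ⊗R_ℓ satisfying A_{ij} = −(A_{ji})^σ for all i,j. Then the closedness condition (∂/∂x_i)_L A_{jk} − (∂/∂x_j)_R A_{ik} + ((∂/∂x_k)_L A_{ij})^{σ²} = 0 in R_ℓ^{⊗3} for all i,j,k holds if and only if there exists F = (F₁,…,F_ℓ) ∈ (R_ℓ)^ℓ such that A_{ij} = (1/2)(∂F_j/∂x_i − (∂F_i/∂x_j)^σ) for all i,j. -/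

import Mathlib

open TensorProduct LinearMap

section DPA

variable (𝔽 : Type) [Field 𝔽] (V : Type) [Ring V] [Algebra 𝔽 V]

/-- The swap `(u ⊗ v)^σ = v ⊗ u` on `V ⊗ V`. -/
noncomputable abbrev swap2 : V ⊗[𝔽] V ≃ₗ[𝔽] V ⊗[𝔽] V := TensorProduct.comm 𝔽 V V

/-- The cyclic permutation `(u ⊗ v ⊗ w)^σ = w ⊗ u ⊗ v` on `V ⊗ V ⊗ V = (V ⊗ V) ⊗ V`. -/
noncomputable def sigma3 : (V ⊗[𝔽] V) ⊗[𝔽] V ≃ₗ[𝔽] (V ⊗[𝔽] V) ⊗[𝔽] V :=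
  (TensorProduct.comm 𝔽 (V ⊗[𝔽] V) V).trans (TensorProduct.assoc 𝔽 V V V).symm

/-- Left multiplication `a · (u ⊗ v) = (a*u) ⊗ v` (outer bimodule structure). -/
noncomputable def lact2 (a : V) : V ⊗[𝔽] V →ₗ[𝔽] V ⊗[𝔽] V :=
  LinearMap.rTensor V (LinearMap.mulLeft 𝔽 a)

/-- Right multiplication `(u ⊗ v) · c = u ⊗ (v*c)` (outer bimodule structure). -/
noncomputable def ract2 (c : V) : V ⊗[𝔽] V →ₗ[𝔽] V ⊗[𝔽] V :=
  LinearMap.lTensor V (LinearMap.mulRight 𝔽 c)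

/-- `(u ⊗ v) ⋆₁ b = (u*b) ⊗ v`. -/
noncomputable def star1r (b : V) : V ⊗[𝔽] V →ₗ[𝔽] V ⊗[𝔽] V :=
  LinearMap.rTensor V (LinearMap.mulRight 𝔽 b)

/-- `a ⋆₁ (u ⊗ v) = u ⊗ (a*v)`. -/
noncomputable def star1l (a : V) : V ⊗[𝔽] V →ₗ[𝔽] V ⊗[𝔽] V :=
  LinearMap.lTensor V (LinearMap.mulLeft 𝔽 a)

/-- The `•`-product on `V ⊗ V`:  `(u ⊗ v) • (x ⊗ y) = (u*x) ⊗ (y*v)`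
(the multiplication of `V ⊗ Vᵒᵖ`). -/
noncomputable def bullet : V ⊗[𝔽] V →ₗ[𝔽] V ⊗[𝔽] V →ₗ[𝔽] V ⊗[𝔽] V :=
  TensorProduct.lift
    (((TensorProduct.mapBilinear (RingHom.id 𝔽) V V V V).comp (LinearMap.mul 𝔽 V)).compl₂
      ((LinearMap.mul 𝔽 V).flip))

/-- A `2`-fold bracket on `V`: an `𝔽`-bilinear map `V × V → V ⊗ V` satisfying the two
Leibniz rules `{{a,bc}} = {{a,b}}·c + b·{{a,c}}` and `{{ab,c}} = {{a,c}} ⋆₁ b + a ⋆₁ {{b,c}}`. -/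
def IsDoubleBracket (Br : V →ₗ[𝔽] V →ₗ[𝔽] V ⊗[𝔽] V) : Prop :=
  (∀ a b c : V, Br a (b * c) = ract2 𝔽 V c (Br a b) + lact2 𝔽 V b (Br a c)) ∧
  (∀ a b c : V, Br (a * b) c = star1r 𝔽 V b (Br a c) + star1l 𝔽 V a (Br b c))

variable {𝔽 V}

/-- `{{a, B}}_L` : apply the bracket to the first tensor factor. -/
noncomputable def brL (Br : V →ₗ[𝔽] V →ₗ[𝔽] V ⊗[𝔽] V) (a : V) :
    V ⊗[𝔽] V →ₗ[𝔽] (V ⊗[𝔽] V) ⊗[𝔽] V :=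
  LinearMap.rTensor V (Br a)

/-- `{{a, B}}_R` : apply the bracket to the second tensor factor. -/
noncomputable def brR (Br : V →ₗ[𝔽] V →ₗ[𝔽] V ⊗[𝔽] V) (a : V) :
    V ⊗[𝔽] V →ₗ[𝔽] (V ⊗[𝔽] V) ⊗[𝔽] V :=
  (TensorProduct.assoc 𝔽 V V V).symm.toLinearMap ∘ₗ LinearMap.lTensor V (Br a)

variable (𝔽 V)

/-- `ρ₂` : swap the last two tensor factors of `V ⊗ V ⊗ V`. -/
noncomputable def rho2 : (V ⊗[𝔽] V) ⊗[𝔽] V ≃ₗ[𝔽] (V ⊗[𝔽] V) ⊗[𝔽] V :=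
  (TensorProduct.assoc 𝔽 V V V).trans
    ((TensorProduct.congr (LinearEquiv.refl 𝔽 V) (TensorProduct.comm 𝔽 V V)).trans
      (TensorProduct.assoc 𝔽 V V V).symm)

variable {𝔽 V}

/-- Conjugated bullet action used to define the actions `•ᵢ` of `V ⊗ V` on `V ⊗ V ⊗ V`. -/
noncomputable def conjAct (β : V ⊗[𝔽] V →ₗ[𝔽] V ⊗[𝔽] V →ₗ[𝔽] V ⊗[𝔽] V)
    (ρ : (V ⊗[𝔽] V) ⊗[𝔽] V ≃ₗ[𝔽] (V ⊗[𝔽] V) ⊗[𝔽] V) :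
    V ⊗[𝔽] V →ₗ[𝔽] (V ⊗[𝔽] V) ⊗[𝔽] V →ₗ[𝔽] (V ⊗[𝔽] V) ⊗[𝔽] V :=
  (LinearMap.lcomp 𝔽 _ ρ.toLinearMap) ∘ₗ
    (LinearMap.llcomp 𝔽 ((V ⊗[𝔽] V) ⊗[𝔽] V) ((V ⊗[𝔽] V) ⊗[𝔽] V) ((V ⊗[𝔽] V) ⊗[𝔽] V)
      ρ.symm.toLinearMap) ∘ₗ
    (LinearMap.rTensorHom V) ∘ₗ β

variable (𝔽 V)

/-- The right action `X •₁ A`, i.e. `(x⊗y⊗z) •₁ (a⊗b) = x⊗(y*a)⊗(b*z)`;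
`bAct1R A X = X •₁ A`. -/
noncomputable def bAct1R : V ⊗[𝔽] V →ₗ[𝔽] (V ⊗[𝔽] V) ⊗[𝔽] V →ₗ[𝔽] (V ⊗[𝔽] V) ⊗[𝔽] V :=
  conjAct (bullet 𝔽 V).flip ((sigma3 𝔽 V).trans (sigma3 𝔽 V))

/-- The left action `A •₂ X`, i.e. `(a⊗b) •₂ (x⊗y⊗z) = (a*x)⊗y⊗(z*b)`. -/
noncomputable def bAct2L : V ⊗[𝔽] V →ₗ[𝔽] (V ⊗[𝔽] V) ⊗[𝔽] V →ₗ[𝔽] (V ⊗[𝔽] V) ⊗[𝔽] V :=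
  conjAct (bullet 𝔽 V) (rho2 𝔽 V)

/-- The right action `X •₃ A`, i.e. `(x⊗y⊗z) •₃ (a⊗b) = (x*a)⊗(b*y)⊗z`;
`bAct3R A X = X •₃ A`. -/
noncomputable def bAct3R : V ⊗[𝔽] V →ₗ[𝔽] (V ⊗[𝔽] V) ⊗[𝔽] V →ₗ[𝔽] (V ⊗[𝔽] V) ⊗[𝔽] V :=
  conjAct (bullet 𝔽 V).flip (LinearEquiv.refl 𝔽 ((V ⊗[𝔽] V) ⊗[𝔽] V))

/-- `a ⋆₁ (x⊗y⊗z) = x⊗(a*y)⊗z`. -/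
noncomputable def slot2L (a : V) : (V ⊗[𝔽] V) ⊗[𝔽] V →ₗ[𝔽] (V ⊗[𝔽] V) ⊗[𝔽] V :=
  LinearMap.rTensor V (LinearMap.lTensor V (LinearMap.mulLeft 𝔽 a))

/-- `(x⊗y⊗z) ⋆₁ b = x⊗(y*b)⊗z`. -/
noncomputable def slot2R (b : V) : (V ⊗[𝔽] V) ⊗[𝔽] V →ₗ[𝔽] (V ⊗[𝔽] V) ⊗[𝔽] V :=
  LinearMap.rTensor V (LinearMap.lTensor V (LinearMap.mulRight 𝔽 b))

/-- `a ⋆₂ (x⊗y⊗z) = x⊗y⊗(a*z)`. -/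
noncomputable def slot3L (a : V) : (V ⊗[𝔽] V) ⊗[𝔽] V →ₗ[𝔽] (V ⊗[𝔽] V) ⊗[𝔽] V :=
  LinearMap.lTensor (V ⊗[𝔽] V) (LinearMap.mulLeft 𝔽 a)

/-- `(x⊗y⊗z) ⋆₂ b = (x*b)⊗y⊗z`. -/
noncomputable def slot1R (b : V) : (V ⊗[𝔽] V) ⊗[𝔽] V →ₗ[𝔽] (V ⊗[𝔽] V) ⊗[𝔽] V :=
  LinearMap.rTensor V (LinearMap.rTensor V (LinearMap.mulRight 𝔽 b))

/-- outer left: `a · (x⊗y⊗z) = (a*x)⊗y⊗z`. -/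
noncomputable def slot1L (a : V) : (V ⊗[𝔽] V) ⊗[𝔽] V →ₗ[𝔽] (V ⊗[𝔽] V) ⊗[𝔽] V :=
  LinearMap.rTensor V (LinearMap.rTensor V (LinearMap.mulLeft 𝔽 a))

/-- outer right: `(x⊗y⊗z) · b = x⊗y⊗(z*b)`. -/
noncomputable def slot3R (b : V) : (V ⊗[𝔽] V) ⊗[𝔽] V →ₗ[𝔽] (V ⊗[𝔽] V) ⊗[𝔽] V :=
  LinearMap.lTensor (V ⊗[𝔽] V) (LinearMap.mulRight 𝔽 b)

variable {𝔽 V}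

/-- The triple bracket `{{a,b,c}}`. -/
noncomputable def triple (Br : V →ₗ[𝔽] V →ₗ[𝔽] V ⊗[𝔽] V) (a b c : V) :
    (V ⊗[𝔽] V) ⊗[𝔽] V :=
  brL Br a (Br b c) + sigma3 𝔽 V (brL Br b (Br c a)) +
    sigma3 𝔽 V (sigma3 𝔽 V (brL Br c (Br a b)))

variable (𝔽 V)

/-- Skewsymmetry of a 2-fold bracket. -/
def IsSkew (Br : V →ₗ[𝔽] V →ₗ[𝔽] V ⊗[𝔽] V) : Prop :=
  ∀ a b : V, Br a b = - swap2 𝔽 V (Br b a)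

/-- The span of commutators `[V,V]`. -/
def commSub : Submodule 𝔽 V := Submodule.span 𝔽 {x : V | ∃ a b : V, x = a * b - b * a}

variable {𝔽 V}

/-- The associated bracket `{a,b} = m {{a,b}}`. -/
noncomputable def sb (Br : V →ₗ[𝔽] V →ₗ[𝔽] V ⊗[𝔽] V) (a b : V) : V :=
  LinearMap.mul' 𝔽 V (Br a b)

/-- A 2-fold derivation: `D(ab) = (Da)·b + a·(Db)`. -/
def Is2Deriv (D : V →ₗ[𝔽] V ⊗[𝔽] V) : Prop :=
  ∀ a b : V, D (a * b) = ract2 𝔽 V b (D a) + lact2 𝔽 V a (D b)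

/-- `D` and `E` strongly commute: `D_L ∘ E = E_R ∘ D`. -/
def StronglyComm (D E : V →ₗ[𝔽] V ⊗[𝔽] V) : Prop :=
  ∀ f : V, LinearMap.rTensor V D (E f) =
    (TensorProduct.assoc 𝔽 V V V).symm (LinearMap.lTensor V E (D f))

/-!
Exact forms are closed because the partial derivatives of the free algebra strongly commute,
`(∂ᵢ)_L ∂ⱼ = (∂ⱼ)_R ∂ᵢ`: the difference of the two sides is a 2-fold derivation into `R ⊗ R ⊗ R`
(the cross terms of the two Leibniz rules agree) that vanishes on the generators.

Conversely, contract a closed 2-form `A` with the Euler vector field `∑ₖ xₖ ∂/∂xₖ`, getting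
`Gⱼ = ∑ₖ Aₖⱼ' xₖ Aₖⱼ''`. Closedness and skewness give Cartan's formula
`∂Gⱼ/∂xᵢ - (∂Gᵢ/∂xⱼ)^σ = (E + 2) Aᵢⱼ`, where the Euler operator `E` multiplies `u ⊗ v` by its
total degree. In characteristic 0 the operators `N + 1` on `R` (`N` the degree operator) and
`E + 2` on `R ⊗ R` are invertible, and `∂ᵢ ∘ (N + 1) = (E + 2) ∘ ∂ᵢ`; hence `Fⱼ = 2 (N + 1)⁻¹ Gⱼ`
satisfies `∂Fⱼ/∂xᵢ - (∂Fᵢ/∂xⱼ)^σ = 2 Aᵢⱼ`.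
-/

@[simp] lemma ract2_tmul (c u v : V) : ract2 𝔽 V c (u ⊗ₜ[𝔽] v) = u ⊗ₜ[𝔽] (v * c) := rfl

@[simp] lemma lact2_tmul (a u v : V) : lact2 𝔽 V a (u ⊗ₜ[𝔽] v) = (a * u) ⊗ₜ[𝔽] v := rfl

@[simp] lemma sigma3_tmul (u v w : V) :
    sigma3 𝔽 V ((u ⊗ₜ[𝔽] v) ⊗ₜ[𝔽] w) = (w ⊗ₜ[𝔽] u) ⊗ₜ[𝔽] v := rfl

@[simp] lemma slot1L_tmul (a : V) (s : V ⊗[𝔽] V) (v : V) :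
    slot1L 𝔽 V a (s ⊗ₜ[𝔽] v) = lact2 𝔽 V a s ⊗ₜ[𝔽] v := rfl

@[simp] lemma slot3R_tmul (b : V) (s : V ⊗[𝔽] V) (v : V) :
    slot3R 𝔽 V b (s ⊗ₜ[𝔽] v) = s ⊗ₜ[𝔽] (v * b) := rfl

@[simp] lemma sigma3_sigma3_sigma3 (t : (V ⊗[𝔽] V) ⊗[𝔽] V) :
    sigma3 𝔽 V (sigma3 𝔽 V (sigma3 𝔽 V t)) = t := by
  have h : ((sigma3 𝔽 V).toLinearMap ∘ₗ (sigma3 𝔽 V).toLinearMap ∘ₗ (sigma3 𝔽 V).toLinearMap)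
      = LinearMap.id :=
    TensorProduct.ext_threefold fun _ _ _ => rfl
  exact LinearMap.congr_fun h t

lemma assoc_symm_tmul_eq_sigma3 (v : V) (s : V ⊗[𝔽] V) :
    (TensorProduct.assoc 𝔽 V V V).symm (v ⊗ₜ[𝔽] s) = sigma3 𝔽 V (s ⊗ₜ[𝔽] v) := by
  induction s with
  | zero => simp
  | add x y hx hy => simp only [tmul_add, add_tmul, map_add, hx, hy]
  | tmul p q => rfl

lemma Is2Deriv.map_one {D : V →ₗ[𝔽] V ⊗[𝔽] V} (hD : Is2Deriv D) : D 1 = 0 := by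
  simpa [ract2, lact2] using hD 1 1

lemma Is2Deriv.map_algebraMap {D : V →ₗ[𝔽] V ⊗[𝔽] V} (hD : Is2Deriv D) (r : 𝔽) :
    D (algebraMap 𝔽 V r) = 0 := by
  rw [Algebra.algebraMap_eq_smul_one, map_smul, hD.map_one, smul_zero]

/-- `D_R (u ⊗ v) = u ⊗ D v`; the left extension `D_L` is `LinearMap.rTensor V D`. -/
noncomputable def derivR (D : V →ₗ[𝔽] V ⊗[𝔽] V) : V ⊗[𝔽] V →ₗ[𝔽] (V ⊗[𝔽] V) ⊗[𝔽] V :=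
  (TensorProduct.assoc 𝔽 V V V).symm.toLinearMap ∘ₗ LinearMap.lTensor V D

lemma derivR_apply (D : V →ₗ[𝔽] V ⊗[𝔽] V) (t : V ⊗[𝔽] V) :
    derivR D t = (TensorProduct.assoc 𝔽 V V V).symm (LinearMap.lTensor V D t) := rfl

lemma derivR_tmul (D : V →ₗ[𝔽] V ⊗[𝔽] V) (u v : V) :
    derivR D (u ⊗ₜ[𝔽] v) = (TensorProduct.assoc 𝔽 V V V).symm (u ⊗ₜ[𝔽] D v) := rfl

lemma rTensor_swap2 (D : V →ₗ[𝔽] V ⊗[𝔽] V) (t : V ⊗[𝔽] V) :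
    LinearMap.rTensor V D (swap2 𝔽 V t) = sigma3 𝔽 V (sigma3 𝔽 V (derivR D t)) := by
  induction t with
  | zero => simp
  | add x y hx hy => simp only [map_add, hx, hy]
  | tmul u v => simp [derivR_tmul, assoc_symm_tmul_eq_sigma3]

lemma derivR_swap2 (D : V →ₗ[𝔽] V ⊗[𝔽] V) (t : V ⊗[𝔽] V) :
    derivR D (swap2 𝔽 V t) = sigma3 𝔽 V (LinearMap.rTensor V D t) := by
  induction t with
  | zero => simp
  | add x y hx hy => simp only [map_add, hx, hy]
  | tmul u v => simp [derivR_tmul, assoc_symm_tmul_eq_sigma3]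

noncomputable def mulInner : (V ⊗[𝔽] V) ⊗[𝔽] (V ⊗[𝔽] V) →ₗ[𝔽] (V ⊗[𝔽] V) ⊗[𝔽] V :=
  (TensorProduct.assoc 𝔽 V V V).symm.toLinearMap ∘ₗ
    LinearMap.lTensor V ((LinearMap.rTensor V (LinearMap.mul' 𝔽 V)) ∘ₗ
      (TensorProduct.assoc 𝔽 V V V).symm.toLinearMap) ∘ₗ
    (TensorProduct.assoc 𝔽 V V (V ⊗[𝔽] V)).toLinearMap

@[simp] lemma mulInner_tmul (s₁ s₂ t₁ t₂ : V) :
    mulInner ((s₁ ⊗ₜ[𝔽] s₂) ⊗ₜ[𝔽] (t₁ ⊗ₜ[𝔽] t₂)) = (s₁ ⊗ₜ[𝔽] (s₂ * t₁)) ⊗ₜ[𝔽] t₂ := by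
  simp [mulInner]

lemma mulInner_tmul_tmul (s : V ⊗[𝔽] V) (u v : V) :
    mulInner (s ⊗ₜ[𝔽] (u ⊗ₜ[𝔽] v)) = ract2 𝔽 V u s ⊗ₜ[𝔽] v := by
  induction s with
  | zero => simp
  | add x y hx hy => simp only [add_tmul, map_add, hx, hy]
  | tmul p q => simp

lemma assoc_symm_tmul_lact2 (s : V ⊗[𝔽] V) (u v : V) :
    (TensorProduct.assoc 𝔽 V V V).symm (u ⊗ₜ[𝔽] lact2 𝔽 V v s) =
      mulInner ((u ⊗ₜ[𝔽] v) ⊗ₜ[𝔽] s) := by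
  induction s with
  | zero => simp
  | add x y hx hy => simp only [tmul_add, map_add, hx, hy]
  | tmul p q => simp

lemma rTensor_ract2 (D : V →ₗ[𝔽] V ⊗[𝔽] V) (b : V) (t : V ⊗[𝔽] V) :
    LinearMap.rTensor V D (ract2 𝔽 V b t) = slot3R 𝔽 V b (LinearMap.rTensor V D t) := by
  induction t with
  | zero => simp
  | add x y hx hy => simp only [map_add, hx, hy]
  | tmul u v => simp

lemma Is2Deriv.rTensor_lact2 {D : V →ₗ[𝔽] V ⊗[𝔽] V} (hD : Is2Deriv D) (a : V)
    (t : V ⊗[𝔽] V) :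
    LinearMap.rTensor V D (lact2 𝔽 V a t) =
      slot1L 𝔽 V a (LinearMap.rTensor V D t) + mulInner (D a ⊗ₜ[𝔽] t) := by
  induction t with
  | zero => simp
  | add x y hx hy =>
    simp only [map_add, tmul_add, hx, hy]
    abel
  | tmul u v =>
    simp only [lact2_tmul, LinearMap.rTensor_tmul, hD a u, add_tmul, slot1L_tmul,
      mulInner_tmul_tmul]
    abel

lemma derivR_lact2 (D : V →ₗ[𝔽] V ⊗[𝔽] V) (a : V) (t : V ⊗[𝔽] V) :
    derivR D (lact2 𝔽 V a t) = slot1L 𝔽 V a (derivR D t) := by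
  induction t with
  | zero => simp
  | add x y hx hy => simp only [map_add, hx, hy]
  | tmul u v =>
    simp only [lact2_tmul, derivR_tmul, assoc_symm_tmul_eq_sigma3]
    induction D v with
    | zero => simp
    | add x y hx hy => simp only [add_tmul, map_add, hx, hy]
    | tmul p q => simp

lemma Is2Deriv.derivR_ract2 {D : V →ₗ[𝔽] V ⊗[𝔽] V} (hD : Is2Deriv D) (b : V)
    (t : V ⊗[𝔽] V) :
    derivR D (ract2 𝔽 V b t) = slot3R 𝔽 V b (derivR D t) + mulInner (t ⊗ₜ[𝔽] D b) := by
  induction t with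
  | zero => simp
  | add x y hx hy =>
    simp only [map_add, add_tmul, hx, hy]
    abel
  | tmul u v =>
    rw [ract2_tmul, derivR_tmul, derivR_tmul, hD v b, tmul_add, map_add,
      assoc_symm_tmul_lact2]
    congr 1
    induction D v with
    | zero => simp
    | add x y hx hy => simp only [map_add, tmul_add, hx, hy]
    | tmul p q => simp

lemma stronglyComm_of_apply_ι {X : Type}
    {D E : FreeAlgebra 𝔽 X →ₗ[𝔽] FreeAlgebra 𝔽 X ⊗[𝔽] FreeAlgebra 𝔽 X}
    (hD : Is2Deriv D) (hE : Is2Deriv E)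
    (hDι : ∀ k, ∃ c : 𝔽, D (FreeAlgebra.ι 𝔽 k) = c • (1 ⊗ₜ[𝔽] 1))
    (hEι : ∀ k, ∃ c : 𝔽, E (FreeAlgebra.ι 𝔽 k) = c • (1 ⊗ₜ[𝔽] 1)) :
    StronglyComm D E := by
  intro f
  rw [← derivR_apply]
  induction f using FreeAlgebra.induction with
  | grade0 r => simp [hD.map_algebraMap, hE.map_algebraMap]
  | grade1 k =>
    obtain ⟨c, hc⟩ := hDι k
    obtain ⟨d, hd⟩ := hEι k
    simp [hc, hd, derivR_tmul, hD.map_one, hE.map_one]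
  | mul a b ha hb =>
    rw [hE a b, hD a b, map_add, map_add, rTensor_ract2, hD.rTensor_lact2, hE.derivR_ract2,
      derivR_lact2, ha, hb]
    abel
  | add a b ha hb => simp only [map_add, ha, hb]

section ClosedForms

variable {X : Type*}

def IsSkewForm (A : X → X → V ⊗[𝔽] V) : Prop :=
  ∀ i j, A i j = - swap2 𝔽 V (A j i)

def IsClosedForm (D : X → (V →ₗ[𝔽] V ⊗[𝔽] V)) (A : X → X → V ⊗[𝔽] V) : Prop :=
  ∀ i j k, LinearMap.rTensor V (D i) (A j k) - derivR (D j) (A i k)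
    + sigma3 𝔽 V (sigma3 𝔽 V (LinearMap.rTensor V (D k) (A i j))) = 0

variable {D : X → (V →ₗ[𝔽] V ⊗[𝔽] V)} {A : X → X → V ⊗[𝔽] V}

lemma IsSkewForm.rTensor_apply (hA : IsSkewForm A) (E : V →ₗ[𝔽] V ⊗[𝔽] V) (i j : X) :
    LinearMap.rTensor V E (A i j) = - sigma3 𝔽 V (sigma3 𝔽 V (derivR E (A j i))) := by
  rw [hA i j, map_neg, rTensor_swap2]

lemma IsSkewForm.derivR_apply (hA : IsSkewForm A) (E : V →ₗ[𝔽] V ⊗[𝔽] V) (i j : X) :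
    derivR E (A i j) = - sigma3 𝔽 V (LinearMap.rTensor V E (A j i)) := by
  rw [hA i j, map_neg, derivR_swap2]

lemma IsClosedForm.rTensor_apply (hC : IsClosedForm D A) (i j k : X) :
    LinearMap.rTensor V (D i) (A j k) =
      derivR (D j) (A i k) - sigma3 𝔽 V (sigma3 𝔽 V (LinearMap.rTensor V (D k) (A i j))) := by
  rw [eq_sub_iff_add_eq, ← sub_eq_zero, ← hC i j k]
  abel

lemma IsClosedForm.derivR_apply (hC : IsClosedForm D A) (hA : IsSkewForm A) (i j k : X) :
    derivR (D i) (A j k) =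
      LinearMap.rTensor V (D j) (A i k) - sigma3 𝔽 V (derivR (D k) (A i j)) := by
  have h := hC j i k
  rw [hA.rTensor_apply (D k) j i, map_neg, map_neg, sigma3_sigma3_sigma3] at h
  rw [eq_sub_iff_add_eq, ← sub_eq_zero, ← neg_eq_zero, ← h]
  abel

lemma isClosedForm_smul_exact (hD : ∀ a b, StronglyComm (D a) (D b)) (F : X → V) (c : 𝔽) :
    IsClosedForm D fun i j => c • (D i (F j) - swap2 𝔽 V (D j (F i))) := by
  have hcomm : ∀ a b f, LinearMap.rTensor V (D a) (D b f) = derivR (D b) (D a f) := hD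
  intro i j k
  simp only [map_smul, map_sub, rTensor_swap2, derivR_swap2, hcomm, sigma3_sigma3_sigma3]
  module

end ClosedForms

noncomputable def insertion (a : V) : V ⊗[𝔽] V →ₗ[𝔽] V :=
  LinearMap.mul' 𝔽 V ∘ₗ LinearMap.lTensor V (LinearMap.mulLeft 𝔽 a)

noncomputable def insertLeft (a : V) : (V ⊗[𝔽] V) ⊗[𝔽] V →ₗ[𝔽] V ⊗[𝔽] V :=
  LinearMap.rTensor V (insertion a)

noncomputable def insertRight (a : V) : (V ⊗[𝔽] V) ⊗[𝔽] V →ₗ[𝔽] V ⊗[𝔽] V :=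
  LinearMap.lTensor V (insertion a) ∘ₗ (TensorProduct.assoc 𝔽 V V V).toLinearMap

@[simp] lemma insertion_tmul (a u v : V) : insertion a (u ⊗ₜ[𝔽] v) = u * (a * v) := rfl

@[simp] lemma insertLeft_tmul (a : V) (s : V ⊗[𝔽] V) (r : V) :
    insertLeft a (s ⊗ₜ[𝔽] r) = insertion a s ⊗ₜ[𝔽] r := rfl

@[simp] lemma insertRight_tmul (a p q r : V) :
    insertRight a ((p ⊗ₜ[𝔽] q) ⊗ₜ[𝔽] r) = p ⊗ₜ[𝔽] (q * (a * r)) := rfl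

@[simp] lemma insertRight_assoc_symm (a : V) (x : V ⊗[𝔽] (V ⊗[𝔽] V)) :
    insertRight a ((TensorProduct.assoc 𝔽 V V V).symm x) =
      LinearMap.lTensor V (insertion a) x := by
  simp [insertRight]

lemma insertRight_tmul_eq_ract2 (a : V) (s : V ⊗[𝔽] V) (r : V) :
    insertRight a (s ⊗ₜ[𝔽] r) = ract2 𝔽 V (a * r) s := by
  induction s with
  | zero => simp
  | add x y hx hy => simp only [add_tmul, map_add, hx, hy]
  | tmul p q => simp

lemma insertLeft_assoc_symm_tmul (a u : V) (s : V ⊗[𝔽] V) :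
    insertLeft a ((TensorProduct.assoc 𝔽 V V V).symm (u ⊗ₜ[𝔽] s)) =
      lact2 𝔽 V u (lact2 𝔽 V a s) := by
  induction s with
  | zero => simp
  | add x y hx hy => simp only [tmul_add, map_add, hx, hy]
  | tmul p q => simp

lemma insertion_ract2 (a b : V) (s : V ⊗[𝔽] V) :
    insertion a (ract2 𝔽 V b s) = insertion a s * b := by
  induction s with
  | zero => simp
  | add x y hx hy => simp only [map_add, hx, hy, add_mul]
  | tmul u v => simp [mul_assoc]

lemma insertion_lact2 (a c : V) (s : V ⊗[𝔽] V) :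
    insertion a (lact2 𝔽 V c s) = c * insertion a s := by
  induction s with
  | zero => simp
  | add x y hx hy => simp only [map_add, hx, hy, mul_add]
  | tmul u v => simp [mul_assoc]

lemma swap2_insertLeft (a : V) (w : (V ⊗[𝔽] V) ⊗[𝔽] V) :
    swap2 𝔽 V (insertLeft a w) = insertRight a (sigma3 𝔽 V w) := by
  have h : (swap2 𝔽 V).toLinearMap ∘ₗ insertLeft a =
      insertRight a ∘ₗ (sigma3 𝔽 V).toLinearMap :=
    TensorProduct.ext_threefold fun _ _ _ => rfl
  exact LinearMap.congr_fun h w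

lemma swap2_insertRight (a : V) (w : (V ⊗[𝔽] V) ⊗[𝔽] V) :
    swap2 𝔽 V (insertRight a w) = insertLeft a (sigma3 𝔽 V (sigma3 𝔽 V w)) := by
  have h : (swap2 𝔽 V).toLinearMap ∘ₗ insertRight a =
      insertLeft a ∘ₗ (sigma3 𝔽 V).toLinearMap ∘ₗ (sigma3 𝔽 V).toLinearMap :=
    TensorProduct.ext_threefold fun _ _ _ => rfl
  exact LinearMap.congr_fun h w

lemma Is2Deriv.map_insertion {D : V →ₗ[𝔽] V ⊗[𝔽] V} (hD : Is2Deriv D) {a : V} {c : 𝔽}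
    (ha : D a = c • (1 ⊗ₜ[𝔽] 1)) (t : V ⊗[𝔽] V) :
    D (insertion a t) =
      insertRight a (LinearMap.rTensor V D t) + c • t + insertLeft a (derivR D t) := by
  induction t with
  | zero => simp
  | add x y hx hy =>
    simp only [map_add, smul_add, hx, hy]
    abel
  | tmul u v =>
    simp only [insertion_tmul, hD u, hD a v, ha, LinearMap.rTensor_tmul,
      insertRight_tmul_eq_ract2, derivR_tmul, insertLeft_assoc_symm_tmul, map_add, map_smul,
      ract2_tmul, lact2_tmul, one_mul, mul_one]
    abel

lemma Module.Basis.bijective_of_apply_eq_smul {ι R M : Type*} [Semiring R] [AddCommMonoid M]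
    [Module R M] (b : Module.Basis ι R M) (f : M →ₗ[R] M) (c : ι → Rˣ)
    (hf : ∀ i, f (b i) = c i • b i) : Function.Bijective f := by
  have h : f = (b.equiv (b.unitsSMul c) (Equiv.refl ι)).toLinearMap :=
    b.ext fun i => by simp [hf, Module.Basis.unitsSMul_apply]
  rw [h]
  exact LinearEquiv.bijective _

section FreeAlgebra

variable {X : Type}

structure IsPartialDerivs [DecidableEq X]
    (D : X → (FreeAlgebra 𝔽 X →ₗ[𝔽] FreeAlgebra 𝔽 X ⊗[𝔽] FreeAlgebra 𝔽 X)) : Prop where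
  is2Deriv : ∀ i, Is2Deriv (D i)
  apply_ι : ∀ i k, D i (FreeAlgebra.ι 𝔽 k) =
    if i = k then (1 : FreeAlgebra 𝔽 X) ⊗ₜ[𝔽] (1 : FreeAlgebra 𝔽 X) else 0

variable {D : X → (FreeAlgebra 𝔽 X →ₗ[𝔽] FreeAlgebra 𝔽 X ⊗[𝔽] FreeAlgebra 𝔽 X)}

lemma IsPartialDerivs.apply_ι_eq_smul [DecidableEq X] (hD : IsPartialDerivs D) (i k : X) :
    D i (FreeAlgebra.ι 𝔽 k) =
      (if i = k then 1 else 0 : 𝔽) • ((1 : FreeAlgebra 𝔽 X) ⊗ₜ[𝔽] (1 : FreeAlgebra 𝔽 X)) := by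
  rw [hD.apply_ι]
  split_ifs <;> simp

lemma IsPartialDerivs.stronglyComm [DecidableEq X] (hD : IsPartialDerivs D) (i j : X) :
    StronglyComm (D i) (D j) :=
  stronglyComm_of_apply_ι (hD.is2Deriv i) (hD.is2Deriv j)
    (fun k => ⟨_, hD.apply_ι_eq_smul i k⟩) (fun k => ⟨_, hD.apply_ι_eq_smul j k⟩)

variable [Fintype X]

noncomputable def euler (D : X → (FreeAlgebra 𝔽 X →ₗ[𝔽] FreeAlgebra 𝔽 X ⊗[𝔽] FreeAlgebra 𝔽 X)) :
    FreeAlgebra 𝔽 X →ₗ[𝔽] FreeAlgebra 𝔽 X :=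
  ∑ k, insertion (FreeAlgebra.ι 𝔽 k) ∘ₗ D k

lemma euler_apply (f : FreeAlgebra 𝔽 X) :
    euler D f = ∑ k, insertion (FreeAlgebra.ι 𝔽 k) (D k f) := by
  simp [euler]

lemma euler_mul (hD : ∀ i, Is2Deriv (D i)) (a b : FreeAlgebra 𝔽 X) :
    euler D (a * b) = euler D a * b + a * euler D b := by
  simp only [euler_apply, hD _ a b, map_add, insertion_ract2, insertion_lact2,
    Finset.sum_add_distrib, Finset.sum_mul, Finset.mul_sum]

lemma IsPartialDerivs.euler_ι [DecidableEq X] (hD : IsPartialDerivs D) (k : X) :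
    euler D (FreeAlgebra.ι 𝔽 k) = FreeAlgebra.ι 𝔽 k := by
  simp [euler_apply, hD.apply_ι, apply_ite]

lemma euler_one (hD : ∀ i, Is2Deriv (D i)) : euler D 1 = 0 := by
  simp [euler_apply, (hD _).map_one]

lemma IsPartialDerivs.euler_basisFreeMonoid [DecidableEq X] (hD : IsPartialDerivs D)
    (w : FreeMonoid X) :
    euler D (FreeAlgebra.basisFreeMonoid 𝔽 X w) =
      (w.length : 𝔽) • FreeAlgebra.basisFreeMonoid 𝔽 X w := by
  have hb : ∀ w, FreeAlgebra.basisFreeMonoid 𝔽 X w = FreeMonoid.lift (FreeAlgebra.ι 𝔽) w := by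
    simp [FreeAlgebra.basisFreeMonoid, FreeAlgebra.equivMonoidAlgebraFreeMonoid]
  rw [hb]
  induction w with
  | one => simp [euler_one hD.is2Deriv]
  | of x => simp [hD.euler_ι]
  | mul x y hx hy =>
    rw [map_mul, euler_mul hD.is2Deriv, hx, hy, FreeMonoid.length_mul]
    simp [add_smul]

noncomputable def euler₂ (D : X → (FreeAlgebra 𝔽 X →ₗ[𝔽] FreeAlgebra 𝔽 X ⊗[𝔽] FreeAlgebra 𝔽 X)) :
    FreeAlgebra 𝔽 X ⊗[𝔽] FreeAlgebra 𝔽 X →ₗ[𝔽] FreeAlgebra 𝔽 X ⊗[𝔽] FreeAlgebra 𝔽 X :=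
  LinearMap.rTensor _ (euler D) + LinearMap.lTensor _ (euler D)

@[simp] lemma euler₂_tmul (u v : FreeAlgebra 𝔽 X) :
    euler₂ D (u ⊗ₜ[𝔽] v) = euler D u ⊗ₜ[𝔽] v + u ⊗ₜ[𝔽] euler D v := rfl

lemma euler₂_ract2 (hD : ∀ i, Is2Deriv (D i)) (b : FreeAlgebra 𝔽 X)
    (t : FreeAlgebra 𝔽 X ⊗[𝔽] FreeAlgebra 𝔽 X) :
    euler₂ D (ract2 𝔽 _ b t) = ract2 𝔽 _ b (euler₂ D t) + ract2 𝔽 _ (euler D b) t := by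
  induction t with
  | zero => simp
  | add x y hx hy =>
    simp only [map_add, hx, hy]
    abel
  | tmul u v =>
    simp only [ract2_tmul, euler₂_tmul, euler_mul hD, map_add, tmul_add]
    abel

lemma euler₂_lact2 (hD : ∀ i, Is2Deriv (D i)) (a : FreeAlgebra 𝔽 X)
    (t : FreeAlgebra 𝔽 X ⊗[𝔽] FreeAlgebra 𝔽 X) :
    euler₂ D (lact2 𝔽 _ a t) = lact2 𝔽 _ a (euler₂ D t) + lact2 𝔽 _ (euler D a) t := by
  induction t with
  | zero => simp
  | add x y hx hy =>
    simp only [map_add, hx, hy]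
    abel
  | tmul u v =>
    simp only [lact2_tmul, euler₂_tmul, euler_mul hD, map_add, add_tmul]
    abel

lemma swap2_euler₂ (t : FreeAlgebra 𝔽 X ⊗[𝔽] FreeAlgebra 𝔽 X) :
    swap2 𝔽 _ (euler₂ D t) = euler₂ D (swap2 𝔽 _ t) := by
  induction t with
  | zero => simp
  | add x y hx hy => simp only [map_add, hx, hy]
  | tmul u v => simp [add_comm]

lemma IsPartialDerivs.map_euler [DecidableEq X] (hD : IsPartialDerivs D) (i : X)
    (f : FreeAlgebra 𝔽 X) : D i (euler D f) = euler₂ D (D i f) + D i f := by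
  induction f using FreeAlgebra.induction with
  | grade0 r => simp [euler_apply, (hD.is2Deriv _).map_algebraMap]
  | grade1 k =>
    rw [hD.euler_ι, hD.apply_ι]
    split_ifs <;> simp [euler_one hD.is2Deriv]
  | mul a b ha hb =>
    rw [euler_mul hD.is2Deriv, map_add, hD.is2Deriv i, hD.is2Deriv i, hD.is2Deriv i, map_add,
      euler₂_ract2 hD.is2Deriv, euler₂_lact2 hD.is2Deriv, ha, hb]
    simp only [map_add]
    abel
  | add a b ha hb =>
    simp only [map_add, ha, hb]
    abel

lemma IsPartialDerivs.bijective_euler_add_one [CharZero 𝔽] [DecidableEq X]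
    (hD : IsPartialDerivs D) : Function.Bijective
      ⇑(euler D + LinearMap.id : FreeAlgebra 𝔽 X →ₗ[𝔽] FreeAlgebra 𝔽 X) :=
  (FreeAlgebra.basisFreeMonoid 𝔽 X).bijective_of_apply_eq_smul (euler D + LinearMap.id)
    (fun w => Units.mk0 ((w.length : 𝔽) + 1) (Nat.cast_add_one_ne_zero _))
    fun w => by simp [hD.euler_basisFreeMonoid, add_smul]

lemma IsPartialDerivs.bijective_euler₂_add_two [CharZero 𝔽] [DecidableEq X]
    (hD : IsPartialDerivs D) : Function.Bijective
      ⇑(euler₂ D + (2 : 𝔽) • LinearMap.id :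
        FreeAlgebra 𝔽 X ⊗[𝔽] FreeAlgebra 𝔽 X →ₗ[𝔽] FreeAlgebra 𝔽 X ⊗[𝔽] FreeAlgebra 𝔽 X) :=
  ((FreeAlgebra.basisFreeMonoid 𝔽 X).tensorProduct
    (FreeAlgebra.basisFreeMonoid 𝔽 X)).bijective_of_apply_eq_smul
    (euler₂ D + (2 : 𝔽) • LinearMap.id)
    (fun w => Units.mk0 ((w.1.length + w.2.length + 2 : ℕ) : 𝔽) (Nat.cast_ne_zero.2 (by omega)))
    fun ⟨w₁, w₂⟩ => by
      simp only [Module.Basis.tensorProduct_apply, LinearMap.add_apply, LinearMap.smul_apply,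
        LinearMap.id_apply, euler₂_tmul, hD.euler_basisFreeMonoid, ← smul_tmul', tmul_smul,
        Units.smul_mk0]
      push_cast
      module

noncomputable def eulerContraction (T : X → FreeAlgebra 𝔽 X ⊗[𝔽] FreeAlgebra 𝔽 X) :
    FreeAlgebra 𝔽 X :=
  ∑ k, insertion (FreeAlgebra.ι 𝔽 k) (T k)

noncomputable def insertSum
    (U W : X → (FreeAlgebra 𝔽 X ⊗[𝔽] FreeAlgebra 𝔽 X) ⊗[𝔽] FreeAlgebra 𝔽 X) :
    FreeAlgebra 𝔽 X ⊗[𝔽] FreeAlgebra 𝔽 X :=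
  ∑ k, (insertRight (FreeAlgebra.ι 𝔽 k) (U k) + insertLeft (FreeAlgebra.ι 𝔽 k) (W k))

section InsertSum

variable (U U' W W' : X → (FreeAlgebra 𝔽 X ⊗[𝔽] FreeAlgebra 𝔽 X) ⊗[𝔽] FreeAlgebra 𝔽 X)

lemma insertSum_sub :
    insertSum (fun k => U k - U' k) (fun k => W k - W' k) = insertSum U W - insertSum U' W' := by
  simp only [insertSum, map_sub, ← Finset.sum_sub_distrib]
  exact Finset.sum_congr rfl fun _ _ => by abel

lemma insertSum_neg : insertSum (fun k => - U k) (fun k => - W k) = - insertSum U W := by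
  simp only [insertSum, map_neg, ← Finset.sum_neg_distrib, neg_add]

lemma swap2_insertSum :
    swap2 𝔽 _ (insertSum U W) =
      insertSum (fun k => sigma3 𝔽 _ (W k)) (fun k => sigma3 𝔽 _ (sigma3 𝔽 _ (U k))) := by
  simp only [insertSum, map_sum, map_add, swap2_insertLeft, swap2_insertRight]
  exact Finset.sum_congr rfl fun _ _ => add_comm _ _

end InsertSum

lemma insertSum_derivR_rTensor (t : FreeAlgebra 𝔽 X ⊗[𝔽] FreeAlgebra 𝔽 X) :
    insertSum (fun k => derivR (D k) t) (fun k => LinearMap.rTensor _ (D k) t) = euler₂ D t := by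
  induction t with
  | zero => simp [insertSum]
  | add x y hx hy =>
    simp only [insertSum, map_add, Finset.sum_add_distrib] at hx hy ⊢
    rw [← hx, ← hy]
    abel
  | tmul u v =>
    simp [insertSum, derivR_tmul, euler_apply, Finset.sum_add_distrib, tmul_sum, sum_tmul,
      add_comm]

lemma IsPartialDerivs.map_eulerContraction [DecidableEq X] (hD : IsPartialDerivs D) (i : X)
    (T : X → FreeAlgebra 𝔽 X ⊗[𝔽] FreeAlgebra 𝔽 X) :
    D i (eulerContraction T) = T i +
      insertSum (fun k => LinearMap.rTensor _ (D i) (T k)) (fun k => derivR (D i) (T k)) := by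
  simp only [eulerContraction, insertSum, map_sum,
    (hD.is2Deriv i).map_insertion (hD.apply_ι_eq_smul i _), Finset.sum_add_distrib, ite_smul,
    one_smul, zero_smul, Finset.sum_ite_eq, Finset.mem_univ, if_true]
  abel

end FreeAlgebra

section Homotopy

variable {X : Type} [Fintype X] [DecidableEq X]
  {D : X → (FreeAlgebra 𝔽 X →ₗ[𝔽] FreeAlgebra 𝔽 X ⊗[𝔽] FreeAlgebra 𝔽 X)}
  {A : X → X → FreeAlgebra 𝔽 X ⊗[𝔽] FreeAlgebra 𝔽 X}

lemma IsPartialDerivs.sub_swap2_eulerContraction (hD : IsPartialDerivs D) (hA : IsSkewForm A)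
    (hC : IsClosedForm D A) (i j : X) :
    D i (eulerContraction fun k => A k j) - swap2 𝔽 _ (D j (eulerContraction fun k => A k i)) =
      euler₂ D (A i j) + (2 : 𝔽) • A i j := by
  set P := insertSum (fun k => sigma3 𝔽 _ (sigma3 𝔽 _ (LinearMap.rTensor _ (D j) (A i k))))
    (fun k => sigma3 𝔽 _ (derivR (D j) (A i k)))
  have hi : D i (eulerContraction fun k => A k j) = A i j + euler₂ D (A i j) - P := by
    simp only [hD.map_eulerContraction, hC.rTensor_apply i _ j, hC.derivR_apply hA i _ j,
      insertSum_sub, insertSum_derivR_rTensor]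
    abel
  have hj : swap2 𝔽 _ (D j (eulerContraction fun k => A k i)) = - A i j - P := by
    simp only [hD.map_eulerContraction, hA.rTensor_apply (D j) _ i, hA.derivR_apply (D j) _ i,
      insertSum_neg, map_add, map_neg, swap2_insertSum, sigma3_sigma3_sigma3]
    rw [hA i j, neg_neg]
    abel
  rw [hi, hj]
  module

lemma IsPartialDerivs.exists_eq_of_isClosedForm [CharZero 𝔽] (hD : IsPartialDerivs D)
    (hA : IsSkewForm A) (hC : IsClosedForm D A) :
    ∃ F : X → FreeAlgebra 𝔽 X, ∀ i j,
      A i j = (2 : 𝔽)⁻¹ • (D i (F j) - swap2 𝔽 _ (D j (F i))) := by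
  set e₁ := LinearEquiv.ofBijective _ hD.bijective_euler_add_one
  set e₂ := LinearEquiv.ofBijective _ hD.bijective_euler₂_add_two
  have hDe (i : X) (f : FreeAlgebra 𝔽 X) : D i (e₁.symm f) = e₂.symm (D i f) :=
    Function.Semiconj.inverses_right (f := D i) (ga := e₁) (gb := e₂)
      (fun f => by
        simp only [e₁, e₂, LinearEquiv.ofBijective_apply, LinearMap.add_apply,
          LinearMap.smul_apply, LinearMap.id_apply, map_add, hD.map_euler]
        module)
      e₁.apply_symm_apply e₂.symm_apply_apply f
  have hσe (t : FreeAlgebra 𝔽 X ⊗[𝔽] FreeAlgebra 𝔽 X) :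
      swap2 𝔽 _ (e₂.symm t) = e₂.symm (swap2 𝔽 _ t) :=
    Function.Semiconj.inverses_right (f := swap2 𝔽 _) (ga := e₂) (gb := e₂)
      (fun t => by simp [e₂, swap2_euler₂]) e₂.apply_symm_apply e₂.symm_apply_apply t
  refine ⟨fun j => (2 : 𝔽) • e₁.symm (eulerContraction fun k => A k j), fun i j => ?_⟩
  calc A i j = e₂.symm (e₂ (A i j)) := (e₂.symm_apply_apply _).symm
    _ = e₂.symm (D i (eulerContraction fun k => A k j)
          - swap2 𝔽 _ (D j (eulerContraction fun k => A k i))) := by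
      rw [hD.sub_swap2_eulerContraction hA hC]
      rfl
    _ = _ := by
      simp only [map_smul, hDe, hσe, map_sub]
      module

end Homotopy

/-- on the free algebra `R_ℓ`, a 2-form `A` (i.e. `A_{ij} = −(A_{ji})^σ`)
is closed, i.e.
`(∂/∂x_i)_L A_{jk} − (∂/∂x_j)_R A_{ik} + ((∂/∂x_k)_L A_{ij})^{σ²} = 0` for all `i,j,k`,
iff there is `F` with `A_{ij} = (1/2)(∂F_j/∂x_i − (∂F_i/∂x_j)^σ)`. -/
theorem statement_18 (𝔽 : Type) [Field 𝔽] [CharZero 𝔽] (ℓ : ℕ)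
    (D : Fin ℓ → (FreeAlgebra 𝔽 (Fin ℓ) →ₗ[𝔽] FreeAlgebra 𝔽 (Fin ℓ) ⊗[𝔽] FreeAlgebra 𝔽 (Fin ℓ)))
    (hD : ∀ i, Is2Deriv (D i))
    (hgen : ∀ i k, D i (FreeAlgebra.ι 𝔽 k) =
      if i = k then (1 : FreeAlgebra 𝔽 (Fin ℓ)) ⊗ₜ[𝔽] (1 : FreeAlgebra 𝔽 (Fin ℓ)) else 0)
    (A : Fin ℓ → Fin ℓ → FreeAlgebra 𝔽 (Fin ℓ) ⊗[𝔽] FreeAlgebra 𝔽 (Fin ℓ))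
    (hA : ∀ i j, A i j = - swap2 𝔽 (FreeAlgebra 𝔽 (Fin ℓ)) (A j i)) :
    (∀ i j k,
        LinearMap.rTensor (FreeAlgebra 𝔽 (Fin ℓ)) (D i) (A j k)
        - (TensorProduct.assoc 𝔽 (FreeAlgebra 𝔽 (Fin ℓ)) (FreeAlgebra 𝔽 (Fin ℓ))
            (FreeAlgebra 𝔽 (Fin ℓ))).symm
            (LinearMap.lTensor (FreeAlgebra 𝔽 (Fin ℓ)) (D j) (A i k))
        + sigma3 𝔽 (FreeAlgebra 𝔽 (Fin ℓ)) (sigma3 𝔽 (FreeAlgebra 𝔽 (Fin ℓ))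
            (LinearMap.rTensor (FreeAlgebra 𝔽 (Fin ℓ)) (D k) (A i j))) = 0)
      ↔ ∃ F : Fin ℓ → FreeAlgebra 𝔽 (Fin ℓ), ∀ i j,
          A i j = ((2 : 𝔽)⁻¹) •
            (D i (F j) - swap2 𝔽 (FreeAlgebra 𝔽 (Fin ℓ)) (D j (F i))) := by
  have hP : IsPartialDerivs D := ⟨hD, hgen⟩
  refine ⟨hP.exists_eq_of_isClosedForm hA, ?_⟩
  rintro ⟨F, hF⟩
  obtain rfl : A = fun i j => (2 : 𝔽)⁻¹ • (D i (F j) - swap2 𝔽 _ (D j (F i))) := funext₂ hF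
  exact isClosedForm_smul_exact hP.stronglyComm F _
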